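/- arXiv:0901.0354 — 6 statements merged into one kernel-verified Lean document; each statement's English description precedes it below -/
import Mathlib

section
/- Let d be a positive integer, p a prime with p > 3d, b ≥ 1 and m ≥ 1 integers, and let i_0, …, i_{l−1} be l distinct elements of ℤ/(b) with 0 ≤ l ≤ b. Let A = ({1, …, m−1} × ℤ/(b)) ∪ {(m, i_0), …, (m, i_{l−1})}, and let τ be a permutation of A. Then ∑_{a ∈ A} δ_<^τ(a) ≥ b·∑_{a=0}^{m−1} (δ_<(a) − δ_∈(a)) + l·(δ_<(m) − δ_∈(m)). -/
open scoped Classical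

/-- `{x}' := {x}` if the fractional part is nonzero, else `1`. -/
noncomputable def fract' (x : ℚ) : ℚ := if Int.fract x = 0 then 1 else Int.fract x

/-- `δ_∈(a) = 1` iff there is `i ≥ 1` with `p·i ≡ a (mod d)` and `i/d < {a/d}`. -/
noncomputable def deltaIn (d p a : ℕ) : ℤ :=
  if ∃ i : ℕ, 1 ≤ i ∧ p * i ≡ a [MOD d] ∧ (i : ℚ) / d < Int.fract ((a : ℚ) / d) then 1 else 0

/-- `δ_<(a) = 1` iff `{a/d}' < {pa/d}'`. -/
noncomputable def deltaLt (d p a : ℕ) : ℤ :=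
  if fract' ((a : ℚ) / d) < fract' (((p : ℚ) * a) / d) then 1 else 0

/-- `ϖ(a) = ⌈(p−1)a/d⌉ − δ_∈(a)`. -/
noncomputable def varpi (d p a : ℕ) : ℤ :=
  ⌈(((p : ℚ) - 1) * a) / d⌉ - deltaIn d p a

/-- The arithmetic polygon of `△ = [0, d]`: `p_△(m) = ∑_{a=0}^{m−1} ϖ(a)`. -/
noncomputable def pTri (d p m : ℕ) : ℤ := ∑ a ∈ Finset.range m, varpi d p a

/-!
Write `σ` for multiplication by `p` on `ℤ/(d)` (a bijection, as `p > d` is prime) and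
`ν(x) = posVal x ∈ {1, …, d}` for the representative of `x`, so that `{a/d}' = ν(a)/d`. Then
`δ_<(a) = [ν(a) < ν(σa)]`, `δ_∈(a) = [ν(σ⁻¹a) < ν(a)]`, and the summand on the right is
`[ν(τa) < ν(σa)]`.

For every threshold `k`, `[k < ν(σa)] - [k < ν(τa)] ≤ [ν(τa) < ν(σa)]`; since `τ` permutes `A`,
summing over `A` bounds the right-hand side below by `∑_A ([k < ν(σa)] - [k < ν(a)])`, and it
remains to choose `k`. Both `a ↦ δ_<(a) - δ_∈(a)` and `a ↦ [k < ν(σa)] - [k < ν(a)]` are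
`d`-periodic with vanishing sum over a period, so only `e = m mod d` matters. Reindexing by `σ`
gives `∑_{a<e} (δ_<(a) - δ_∈(a)) = #{x | ν(x) < e ≤ ν(σx)}`; this count is matched by `k = e - 1`
or by `k = e` (according as `ν(σ⁻¹e) < e` or not), and that choice also dominates the term at `m`.
-/

namespace ZMod

def posVal {d : ℕ} (x : ZMod d) : ℕ := if x = 0 then d else x.val

lemma posVal_natCast {d : ℕ} (a : ℕ) :
    posVal (a : ZMod d) = if a % d = 0 then d else a % d := by
  simp only [posVal, natCast_eq_zero_iff, Nat.dvd_iff_mod_eq_zero, val_natCast]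

lemma posVal_natCast_of_lt {d a : ℕ} (ha : 0 < a) (had : a < d) : posVal (a : ZMod d) = a := by
  rw [posVal_natCast, Nat.mod_eq_of_lt had, if_neg ha.ne']

variable {d : ℕ} [NeZero d]

lemma posVal_pos (x : ZMod d) : 0 < posVal x := by
  unfold posVal
  split_ifs with hx
  · exact NeZero.pos d
  · exact Nat.pos_of_ne_zero ((val_ne_zero x).2 hx)

@[simp]
lemma natCast_posVal (x : ZMod d) : (posVal x : ZMod d) = x := by
  unfold posVal
  split_ifs with hx
  · simp [hx]
  · exact natCast_zmod_val x

end ZMod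

open ZMod Finset

section Fract

variable {d : ℕ} [NeZero d]

lemma fract'_natCast_div (a : ℕ) : fract' ((a : ℚ) / d) = posVal (a : ZMod d) / d := by
  have hd : (d : ℚ) ≠ 0 := Nat.cast_ne_zero.2 (NeZero.ne d)
  rw [fract', Int.fract_div_natCast_eq_div_natCast_mod, posVal_natCast]
  split_ifs with h h' h'
  · exact (div_self hd).symm
  · simp [hd, h'] at h
  · simp [h'] at h
  · rfl

lemma fract'_natCast_div_lt_iff (a b : ℕ) :
    fract' ((a : ℚ) / d) < fract' ((b : ℚ) / d) ↔ posVal (a : ZMod d) < posVal (b : ZMod d) := by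
  rw [fract'_natCast_div, fract'_natCast_div,
    div_lt_div_iff_of_pos_right (Nat.cast_pos.2 (NeZero.pos d)), Nat.cast_lt]

lemma deltaLt_eq (p a : ℕ) :
    deltaLt d p a =
      if posVal (a : ZMod d) < posVal ((p : ZMod d) * (a : ZMod d)) then 1 else 0 := by
  have h := fract'_natCast_div_lt_iff (d := d) a (p * a)
  push_cast at h
  exact if_congr h rfl rfl

lemma deltaIn_eq {p : ℕ} (u : (ZMod d)ˣ) (hu : (u : ZMod d) = p) (a : ℕ) :
    deltaIn d p a =
      if posVal ((u⁻¹ : (ZMod d)ˣ) * (a : ZMod d) : ZMod d) < posVal (a : ZMod d) then 1 else 0 := by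
  have hd : (0 : ℚ) < d := Nat.cast_pos.2 (NeZero.pos d)
  refine if_congr ⟨?_, fun h => ?_⟩ rfl rfl
  · rintro ⟨i, hi, hpi, hlt⟩
    rw [Int.fract_div_natCast_eq_div_natCast_mod, div_lt_div_iff_of_pos_right hd,
      Nat.cast_lt] at hlt
    have hia : ((u⁻¹ : (ZMod d)ˣ) : ZMod d) * a = i := by
      rw [← (natCast_eq_natCast_iff _ _ _).2 hpi, Nat.cast_mul, ← hu, Units.inv_mul_cancel_left]
    have had := Nat.mod_lt a (NeZero.pos d)
    rwa [hia, posVal_natCast_of_lt hi (by omega), posVal_natCast, if_neg (by omega)]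
  · have ha : a % d ≠ 0 := fun ha => by
      rw [← Nat.dvd_iff_mod_eq_zero, ← natCast_eq_zero_iff a d] at ha
      simp [ha] at h
    refine ⟨posVal (((u⁻¹ : (ZMod d)ˣ) : ZMod d) * (a : ZMod d)), posVal_pos _,
      (natCast_eq_natCast_iff _ _ _).1 ?_, ?_⟩
    · rw [Nat.cast_mul, natCast_posVal, ← hu, Units.mul_inv_cancel_left]
    · rw [posVal_natCast, if_neg ha] at h
      rwa [Int.fract_div_natCast_eq_div_natCast_mod, div_lt_div_iff_of_pos_right hd, Nat.cast_lt]

end Fract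

section Permutation

variable {d : ℕ} (σ : Equiv.Perm (ZMod d))

def deltaDiff (x : ZMod d) : ℤ :=
  (if posVal x < posVal (σ x) then 1 else 0) - if posVal (σ.symm x) < posVal x then 1 else 0

def thresholdDiff (k : ℕ) (x : ZMod d) : ℤ :=
  (if k < posVal (σ x) then 1 else 0) - if k < posVal x then 1 else 0

variable {σ}

lemma deltaDiff_zero (h0 : σ 0 = 0) : deltaDiff σ 0 = 0 := by
  have h0' : σ.symm 0 = 0 := σ.symm_apply_eq.2 h0.symm
  simp [deltaDiff, h0, h0']

lemma thresholdDiff_zero (h0 : σ 0 = 0) (k : ℕ) : thresholdDiff σ k 0 = 0 := by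
  simp [thresholdDiff, h0]

variable (σ) [NeZero d]

lemma sum_deltaDiff : ∑ x, deltaDiff σ x = 0 := by
  simp only [deltaDiff, sum_sub_distrib, sub_eq_zero]
  rw [← Equiv.sum_comp σ fun x => if posVal (σ.symm x) < posVal x then (1 : ℤ) else 0]
  simp only [Equiv.symm_apply_apply]

lemma sum_thresholdDiff (k : ℕ) : ∑ x, thresholdDiff σ k x = 0 := by
  simp only [thresholdDiff, sum_sub_distrib, sub_eq_zero]
  exact Equiv.sum_comp σ fun x => if k < posVal x then (1 : ℤ) else 0

end Permutation

section Periodic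

variable {d : ℕ} [NeZero d]

lemma sum_range_natCast_add_eq_sum_univ (f : ZMod d → ℤ) (n : ℕ) :
    ∑ i ∈ range d, f ((n + i : ℕ) : ZMod d) = ∑ x, f x := by
  rw [← Equiv.sum_comp (Equiv.addLeft (n : ZMod d)) f]
  push_cast
  exact sum_nbij' (↑) val (fun _ _ => mem_univ _) (fun x _ => mem_range.2 (val_lt x))
    (fun i hi => val_cast_of_lt (mem_range.1 hi)) (fun x _ => natCast_zmod_val x) (fun _ _ => rfl)

lemma sum_range_eq_sum_range_mod (f : ZMod d → ℤ) (hf : ∑ x, f x = 0) (m : ℕ) :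
    ∑ a ∈ range m, f a = ∑ a ∈ range (m % d), f a := by
  induction m using Nat.strong_induction_on with
  | _ m ih =>
    rcases lt_or_ge m d with hm | hm
    · rw [Nat.mod_eq_of_lt hm]
    · obtain ⟨n, rfl⟩ : ∃ n, m = n + d := ⟨m - d, by omega⟩
      rw [sum_range_add, sum_range_natCast_add_eq_sum_univ, hf, add_zero, Nat.add_mod_right,
        ih n (by have := NeZero.pos d; omega)]

lemma sum_range_eq_sum_ite_posVal_lt (f : ZMod d → ℤ) (hf : f 0 = 0) {e : ℕ} (he : e ≤ d) :
    ∑ a ∈ range e, f a = ∑ x, if posVal x < e then f x else 0 := by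
  have hIco : ∑ a ∈ Ico 1 e, f a = ∑ a ∈ range e, f a :=
    sum_subset (fun a ha => by rw [mem_Ico] at ha; rw [mem_range]; omega) fun a ha hna => by
      obtain rfl : a = 0 := by rw [mem_range] at ha; rw [mem_Ico] at hna; omega
      simpa using hf
  rw [← sum_filter, ← hIco]
  refine sum_nbij' (↑) posVal (fun a ha => ?_) (fun x hx => ?_) (fun a ha => ?_)
    (fun x _ => natCast_posVal x) (fun _ _ => rfl)
  · rw [mem_Ico] at ha
    rw [mem_filter, posVal_natCast_of_lt ha.1 (by omega)]
    exact ⟨mem_univ _, ha.2⟩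
  · exact mem_Ico.2 ⟨posVal_pos x, (mem_filter.1 hx).2⟩
  · rw [mem_Ico] at ha
    exact posVal_natCast_of_lt ha.1 (by omega)

end Periodic

section Threshold

variable {d : ℕ} [NeZero d] {σ : Equiv.Perm (ZMod d)}

lemma sum_range_deltaDiff (h0 : σ 0 = 0) {e : ℕ} (he : e ≤ d) :
    ∑ a ∈ range e, deltaDiff σ a = ∑ x, if posVal x < e ∧ e ≤ posVal (σ x) then 1 else 0 := by
  have hreindex : ∑ x, (if posVal x < e ∧ posVal (σ.symm x) < posVal x then 1 else 0 : ℤ) =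
      ∑ x, if posVal (σ x) < e ∧ posVal x < posVal (σ x) then 1 else 0 := by
    rw [← Equiv.sum_comp σ]
    simp only [Equiv.symm_apply_apply]
  have hsplit : ∀ x, (if posVal x < e then deltaDiff σ x else 0) =
      (if posVal x < e ∧ e ≤ posVal (σ x) then 1 else 0) +
        (if posVal (σ x) < e ∧ posVal x < posVal (σ x) then 1 else 0) -
        (if posVal x < e ∧ posVal (σ.symm x) < posVal x then 1 else 0) := by
    intro x
    unfold deltaDiff
    split_ifs <;> omega
  rw [sum_range_eq_sum_ite_posVal_lt _ (deltaDiff_zero h0) he, sum_congr rfl fun x _ => hsplit x,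
    sum_sub_distrib, sum_add_distrib, hreindex, add_sub_cancel_right]

lemma exists_thresholdDiff_of_lt (h0 : σ 0 = 0) {e : ℕ} (he : e < d) : ∃ k,
    ∑ a ∈ range e, thresholdDiff σ k a = ∑ a ∈ range e, deltaDiff σ a ∧
      deltaDiff σ e ≤ thresholdDiff σ k e := by
  rw [sum_range_deltaDiff h0 he.le]
  simp only [sum_range_eq_sum_ite_posVal_lt _ (thresholdDiff_zero h0 _) he.le]
  by_cases hlt : posVal (σ.symm e) < e
  · have he0 : 0 < e := (posVal_pos _).trans hlt
    have hval : posVal (e : ZMod d) = e := posVal_natCast_of_lt he0 he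
    refine ⟨e - 1, sum_congr rfl fun x _ => ?_, ?_⟩
    · unfold thresholdDiff
      split_ifs <;> omega
    · unfold deltaDiff thresholdDiff
      rw [hval]
      split_ifs <;> omega
  · refine ⟨e, sum_congr rfl fun x _ => ?_, ?_⟩
    · have hx : posVal (σ x) = e → e ≤ posVal x := fun hσx => by
        rw [← σ.symm_apply_apply x, ← natCast_posVal (σ x), hσx]
        exact not_lt.1 hlt
      unfold thresholdDiff
      split_ifs <;> omega
    · rcases Nat.eq_zero_or_pos e with rfl | he0
      · simp [deltaDiff_zero h0, thresholdDiff_zero h0]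
      · have hval : posVal (e : ZMod d) = e := posVal_natCast_of_lt he0 he
        unfold deltaDiff thresholdDiff
        rw [hval]
        split_ifs <;> omega

lemma exists_thresholdDiff (h0 : σ 0 = 0) (m : ℕ) : ∃ k,
    ∑ a ∈ range m, thresholdDiff σ k a = ∑ a ∈ range m, deltaDiff σ a ∧
      deltaDiff σ m ≤ thresholdDiff σ k m := by
  obtain ⟨k, hsum, hlast⟩ := exists_thresholdDiff_of_lt h0 (Nat.mod_lt m (NeZero.pos d))
  refine ⟨k, ?_, ?_⟩
  · rwa [sum_range_eq_sum_range_mod _ (sum_thresholdDiff σ k),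
      sum_range_eq_sum_range_mod _ (sum_deltaDiff σ)]
  · rwa [natCast_mod] at hlast

end Threshold

lemma sum_ite_lt_sub_le_sum_ite_lt {α β : Type*} [LinearOrder β] (A : Finset α) (τ : Equiv.Perm α)
    (hτ : ∀ a ∈ A, τ a ∈ A) (f g : α → β) (k : β) :
    ∑ x ∈ A, ((if k < f x then 1 else 0) - if k < g x then 1 else 0 : ℤ) ≤
      ∑ x ∈ A, if g (τ x) < f x then 1 else 0 := by
  have hA : A.map τ.toEmbedding = A := map_eq_of_subset fun y hy => by
    obtain ⟨x, hx, rfl⟩ := mem_map.1 hy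
    exact hτ x hx
  have hperm : ∑ x ∈ A, (if k < g (τ x) then 1 else 0 : ℤ) = ∑ x ∈ A, if k < g x then 1 else 0 := by
    conv_rhs => rw [← hA, sum_map]
    rfl
  rw [sum_sub_distrib, ← hperm, ← sum_sub_distrib]
  refine sum_le_sum fun x _ => ?_
  split_ifs <;> first | order | norm_num

lemma sum_comp_fst_Icc_product_union {b : ℕ} [NeZero b] (m : ℕ) (I : Finset (ZMod b)) (h : ℕ → ℤ)
    (h0 : h 0 = 0) :
    ∑ x ∈ Icc 1 (m - 1) ×ˢ (univ : Finset (ZMod b)) ∪ {m} ×ˢ I, h x.1 =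
      b * ∑ a ∈ range m, h a + I.card * h m := by
  have hdisj : Disjoint (Icc 1 (m - 1) ×ˢ (univ : Finset (ZMod b))) ({m} ×ˢ I) :=
    disjoint_product.2 (Or.inl (disjoint_singleton_right.2 (by rw [mem_Icc]; omega)))
  have hrange : ∑ a ∈ Icc 1 (m - 1), h a = ∑ a ∈ range m, h a :=
    sum_subset (fun a ha => by rw [mem_Icc] at ha; rw [mem_range]; omega) fun a ha hna => by
      obtain rfl : a = 0 := by rw [mem_range] at ha; rw [mem_Icc] at hna; omega
      exact h0
  rw [sum_union hdisj, sum_product, sum_product, ← hrange, mul_sum]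
  simp [sum_const, card_univ, ZMod.card, mul_comm]

theorem stmt2_general (d p : ℕ) (hd : 0 < d) (hp : p.Prime) (hpd : 3 * d < p)
    (b : ℕ) [NeZero b] (m : ℕ)
    (I : Finset (ZMod b))
    (A : Finset (ℕ × ZMod b))
    (hA : A = (Finset.Icc 1 (m - 1)) ×ˢ (Finset.univ : Finset (ZMod b)) ∪
      ({m} : Finset ℕ) ×ˢ I)
    (τ : Equiv.Perm (ℕ × ZMod b)) (hτ : ∀ a ∈ A, τ a ∈ A) :
    (b : ℤ) * ∑ a ∈ Finset.range m, (deltaLt d p a - deltaIn d p a) +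
      (I.card : ℤ) * (deltaLt d p m - deltaIn d p m) ≤
    ∑ a ∈ A, (if fract' (((τ a).1 : ℚ) / d) < fract' (((p : ℚ) * a.1) / d)
      then (1 : ℤ) else 0) := by
  have : NeZero d := ⟨hd.ne'⟩
  have hcop : p.Coprime d := (hp.coprime_iff_not_dvd).2 fun h => by
    have := Nat.le_of_dvd hd h
    omega
  set u := ZMod.unitOfCoprime p hcop
  have hu : (u : ZMod d) = p := ZMod.coe_unitOfCoprime p hcop
  set σ : Equiv.Perm (ZMod d) := Units.mulLeft u with hσ
  have hσ0 : σ 0 = 0 := mul_zero (u : ZMod d)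
  have hdelta (a : ℕ) : deltaLt d p a - deltaIn d p a = deltaDiff σ a := by
    rw [deltaLt_eq, deltaIn_eq u hu, deltaDiff, hσ, Units.mulLeft_symm]
    simp only [Units.mulLeft_apply, hu]
  obtain ⟨k, hsum, hlast⟩ := exists_thresholdDiff hσ0 m
  have hfract (x : ℕ × ZMod b) : fract' (((τ x).1 : ℚ) / d) < fract' ((p : ℚ) * x.1 / d) ↔
      posVal ((τ x).1 : ZMod d) < posVal (σ (x.1 : ZMod d)) := by
    rw [← Nat.cast_mul, fract'_natCast_div_lt_iff, hσ, Units.mulLeft_apply, hu, Nat.cast_mul]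
  calc _ = (b : ℤ) * ∑ a ∈ range m, deltaDiff σ a + I.card * deltaDiff σ m := by
        simp only [hdelta]
    _ ≤ b * ∑ a ∈ range m, thresholdDiff σ k a + I.card * thresholdDiff σ k m := by
        rw [hsum]; gcongr
    _ = ∑ x ∈ A, thresholdDiff σ k x.1 := by
      rw [hA, sum_comp_fst_Icc_product_union m I (fun a => thresholdDiff σ k a)
        (by simpa using thresholdDiff_zero hσ0 k)]
    _ ≤ _ := sum_ite_lt_sub_le_sum_ite_lt A τ hτ _ (fun x => posVal (x.1 : ZMod d)) k
    _ = _ := sum_congr rfl fun x _ => if_congr (hfract x).symm rfl rfl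

theorem stmt2 (d p : ℕ) (hd : 0 < d) (hp : p.Prime) (hpd : 3 * d < p)
    (b : ℕ) [NeZero b] (m : ℕ) (hm : 1 ≤ m)
    (I : Finset (ZMod b))
    (A : Finset (ℕ × ZMod b))
    (hA : A = (Finset.Icc 1 (m - 1)) ×ˢ (Finset.univ : Finset (ZMod b)) ∪
      ({m} : Finset ℕ) ×ˢ I)
    (τ : Equiv.Perm (ℕ × ZMod b)) (hτ : ∀ a ∈ A, τ a ∈ A) :
    (b : ℤ) * ∑ a ∈ Finset.range m, (deltaLt d p a - deltaIn d p a) +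
      (I.card : ℤ) * (deltaLt d p m - deltaIn d p m) ≤
    ∑ a ∈ A, (if fract' (((τ a).1 : ℚ) / d) < fract' (((p : ℚ) * a.1) / d)
      then (1 : ℤ) else 0) :=
  stmt2_general d p hd hp hpd b m I A hA τ hτ
end

section
/- Let d be a positive integer, p a prime with p > 3d, and b, m ≥ 1. Let A be a finite subset of ℕ × ℤ/(b) of cardinality bm, and let τ be a permutation of A such that p·a₁ − (τ(a))₁ ≥ 0 for every a = (a₁, u) ∈ A (if this fails for some a, the corresponding term is +∞ and the inequality holds trivially). Then ∑_{a ∈ A} ⌈(p·a₁ − (τ(a))₁)/d⌉ ≥ b·p_△(m). Moreover, if m is a turning point of p_△ (i.e. ϖ(m) > ϖ(m−1)) and A ≠ A_m × ℤ/(b), where A_m := {a ∈ ℕ : ϖ(a) ≤ ϖ(m−1)}, then the inequality is strict. -/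
/-!
Put `s = m mod d` and `κ(n) = ⌊(pn − s)/d⌋ − ⌊(n − s)/d⌋`. Each ceiling `⌈(p a₁ − τ(a)₁)/d⌉` is
at least `⌊(p a₁ − s)/d⌋ − ⌊(τ(a)₁ − s)/d⌋`, and since `τ` permutes `A` the second terms sum to
`∑ ⌊(a₁ − s)/d⌋`, so the sum is at least `∑_{a ∈ A} κ(a₁)`. For `p ≥ 2d`, `κ` is strictly
increasing, so it is below `κ(m)` on the box `B = {0, …, m−1} × ℤ/(b)` and at least `κ(m)` off
it; as `|A| = |B|`, trading `B ∖ A` for `A ∖ B` gives `∑_A κ ≥ ∑_B κ + |A ∖ B|`. Finally `κ − ϖ`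
depends only on `n mod d`, and since multiplication by `p` permutes the residues,
`δ_∈(py mod d) = [y < py mod d]`; this makes the sums of `κ − ϖ` over a period and over
`{0, …, s−1}` vanish, so `∑_B κ = b·p_△(m)`. As `ϖ` is strictly increasing, `B = A_m × ℤ/(b)`,
which gives the strict inequality.
-/

open scoped Classical

open Finset

theorem Function.Periodic.sum_range {M : Type*} [AddCommMonoid M] {f : ℕ → M} {d : ℕ}
    (hf : Function.Periodic f d) (m : ℕ) :
    ∑ n ∈ range m, f n = (m / d) • ∑ n ∈ range d, f n + ∑ n ∈ range (m % d), f n := by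
  conv_lhs => rw [← Nat.div_add_mod m d]
  induction m / d with
  | zero => simp
  | succ q ih =>
    rw [Nat.mul_succ, add_right_comm, add_comm _ d, sum_range_add]
    simp only [add_comm d, hf _]
    rw [ih, succ_nsmul]
    abel

theorem Finset.sum_add_card_sdiff_le_sum {α : Type*} [DecidableEq α] {A B : Finset α}
    {g : α → ℤ} {c : ℤ} (hcard : #A = #B) (hB : ∀ x ∈ B, g x < c)
    (hA : ∀ x ∈ A \ B, c ≤ g x) :
    ∑ x ∈ B, g x + #(A \ B) ≤ ∑ x ∈ A, g x := by
  have hlow : #(A \ B) • c ≤ ∑ x ∈ A \ B, g x := card_nsmul_le_sum _ _ _ hA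
  have hhigh : ∑ x ∈ B \ A, g x ≤ #(B \ A) • (c - 1) :=
    sum_le_card_nsmul _ _ _ fun x hx => Int.le_sub_one_of_lt (hB x (mem_sdiff.1 hx).1)
  have hsplit := sum_sdiff_sub_sum_sdiff (s₁ := B) (s₂ := A) (f := g)
  rw [card_sdiff_comm hcard.symm, nsmul_eq_mul] at hhigh
  rw [nsmul_eq_mul] at hlow
  linarith

theorem StrictMono.le_apply_sub_one_iff {β : Type*} [LinearOrder β] {f : ℕ → β}
    (hf : StrictMono f) {m n : ℕ} (hm : f (m - 1) < f m) : f n ≤ f (m - 1) ↔ n < m := by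
  rw [hf.le_iff_le]
  have := hf.lt_iff_lt.1 hm
  omega

theorem Int.natCast_sub_ediv {d s : ℕ} (hd : 0 < d) (hs : s ≤ d) (x : ℕ) :
    ((x : ℤ) - s) / d = (x / d : ℕ) - if x % d < s then 1 else 0 := by
  have hx : (d : ℤ) * (x / d : ℕ) + (x % d : ℕ) = x := by exact_mod_cast Nat.div_add_mod x d
  have hxd := Nat.mod_lt x hd
  refine ((Int.ediv_emod_unique (r := (x % d : ℕ) - s + d * if x % d < s then 1 else 0)
    (by exact_mod_cast hd)).mpr ⟨by linear_combination hx, ?_, ?_⟩).1 <;>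
  split_ifs <;> omega

theorem Int.ediv_sub_ediv_le_ceil {d : ℕ} (hd : 0 < d) (x y s : ℤ) :
    (x - s) / d - (y - s) / d ≤ ⌈((x : ℚ) - y) / d⌉ := by
  have hd' : (0 : ℤ) < d := by exact_mod_cast hd
  have hsuper : (y - x) / d + (x - s) / d ≤ (y - s) / d := by
    rw [Int.le_ediv_iff_mul_le hd', add_mul]
    linarith [Int.ediv_mul_le (y - x) hd'.ne', Int.ediv_mul_le (x - s) hd'.ne']
  rw [show ((x : ℚ) - y) = ((x - y : ℤ) : ℚ) by push_cast; ring, Rat.ceil_intCast_div_natCast,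
    neg_sub]
  linarith

theorem sum_range_mul_mod {M : Type*} [AddCommMonoid M] {d p : ℕ} (hcop : p.Coprime d)
    (g : ℕ → M) : ∑ x ∈ range d, g (p * x % d) = ∑ x ∈ range d, g x := by
  have hinj : Set.InjOn (fun x => p * x % d) (range d) := fun x hx y hy hxy =>
    (Nat.ModEq.cancel_left_of_coprime hcop.symm hxy).eq_of_lt_of_lt (mem_range.1 hx)
      (mem_range.1 hy)
  have himage : (range d).image (fun x => p * x % d) = range d := by
    refine eq_of_subset_of_card_le (fun y hy => ?_) (card_image_of_injOn hinj).ge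
    obtain ⟨x, hx, rfl⟩ := mem_image.1 hy
    exact mem_range.2 (Nat.mod_lt _ (Nat.zero_lt_of_lt (mem_range.1 hx)))
  rw [← sum_image hinj, himage]

theorem deltaIn_eq_ite {d : ℕ} (hd : 0 < d) (p n : ℕ) :
    deltaIn d p n = if ∃ i, 1 ≤ i ∧ p * i ≡ n [MOD d] ∧ i < n % d then 1 else 0 := by
  simp only [deltaIn, Int.fract_div_natCast_eq_div_natCast_mod,
    div_lt_div_iff_of_pos_right (by positivity : (0 : ℚ) < d), Nat.cast_lt]

theorem deltaIn_add_self {d : ℕ} (hd : 0 < d) (p n : ℕ) :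
    deltaIn d p (n + d) = deltaIn d p n := by
  rw [deltaIn_eq_ite hd, deltaIn_eq_ite hd, Nat.add_mod_right]
  exact if_congr (by simp only [Nat.ModEq, Nat.add_mod_right]) rfl rfl

theorem deltaIn_mul_mod {d p : ℕ} (hd : 0 < d) (hcop : p.Coprime d) {x : ℕ} (hx : x < d) :
    deltaIn d p (p * x % d) = if x < p * x % d then 1 else 0 := by
  rw [deltaIn_eq_ite hd, Nat.mod_mod]
  refine if_congr ⟨?_, fun h => ⟨x, ?_, (Nat.mod_modEq _ _).symm, h⟩⟩ rfl rfl
  · rintro ⟨i, -, hi, hlt⟩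
    have hix : i ≡ x [MOD d] :=
      Nat.ModEq.cancel_left_of_coprime hcop.symm (hi.trans (Nat.mod_modEq _ _))
    rwa [hix.eq_of_lt_of_lt (hlt.trans (Nat.mod_lt _ hd)) hx] at hlt
  · exact Nat.one_le_iff_ne_zero.2 fun hx0 => by simp [hx0] at h

noncomputable def weightDefect (d p s n : ℕ) : ℤ :=
  (if n % d < s then 1 else 0) + deltaIn d p n - (if p * n % d < s then 1 else 0) -
    if n % d < p * n % d then 1 else 0

theorem weightDefect_periodic {d : ℕ} (hd : 0 < d) (p s : ℕ) :
    Function.Periodic (weightDefect d p s) d := fun n => by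
  simp only [weightDefect, deltaIn_add_self hd, mul_add, Nat.add_mod_right,
    Nat.add_mul_mod_self_right]

theorem sum_range_weightDefect {d p : ℕ} (hd : 0 < d) (hcop : p.Coprime d) (s : ℕ) :
    ∑ n ∈ range d, weightDefect d p s n = 0 := by
  have hthreshold : ∑ x ∈ range d, (if p * x % d < s then (1 : ℤ) else 0) =
      ∑ x ∈ range d, if x < s then 1 else 0 :=
    sum_range_mul_mod hcop fun y => if y < s then (1 : ℤ) else 0
  have hdelta : ∑ x ∈ range d, deltaIn d p x = ∑ x ∈ range d, if x < p * x % d then 1 else 0 := by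
    rw [← sum_range_mul_mod hcop]
    exact sum_congr rfl fun x hx => deltaIn_mul_mod hd hcop (mem_range.1 hx)
  calc ∑ n ∈ range d, weightDefect d p s n
      = ∑ x ∈ range d, ((if x < s then 1 else 0) + deltaIn d p x -
          (if p * x % d < s then 1 else 0) - if x < p * x % d then 1 else 0) :=
        sum_congr rfl fun x hx => by rw [weightDefect, Nat.mod_eq_of_lt (mem_range.1 hx)]
    _ = 0 := by simp only [sum_sub_distrib, sum_add_distrib, hthreshold, hdelta]; ring

theorem sum_range_weightDefect_of_le {d p s : ℕ} (hd : 0 < d) (hcop : p.Coprime d)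
    (hs : s ≤ d) : ∑ n ∈ range s, weightDefect d p s n = 0 := by
  have hrange : ∀ F : ℕ → ℤ, ∑ x ∈ range s, F x = ∑ x ∈ range d, if x < s then F x else 0 := by
    intro F
    rw [← sum_filter]
    congr 1
    ext x
    simp only [mem_range, mem_filter]
    omega
  calc ∑ n ∈ range s, weightDefect d p s n
      = ∑ x ∈ range d, ((if x < s then 1 - (if p * x % d < s then 1 else 0) -
            (if x < p * x % d then 1 else 0) else 0) +
          if x < s then deltaIn d p x else 0) := by
        rw [hrange]
        refine sum_congr rfl fun x hx => ?_
        rw [weightDefect, Nat.mod_eq_of_lt (mem_range.1 hx)]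
        split_ifs <;> ring
    _ = ∑ x ∈ range d, ((if x < s then 1 - (if p * x % d < s then 1 else 0) -
            (if x < p * x % d then 1 else 0) else 0) +
          if p * x % d < s then (if x < p * x % d then 1 else 0) else 0) := by
        rw [sum_add_distrib, sum_add_distrib,
          ← sum_range_mul_mod hcop fun y => if y < s then deltaIn d p y else 0]
        congr 1
        exact sum_congr rfl fun x hx => by rw [deltaIn_mul_mod hd hcop (mem_range.1 hx)]
    _ = 0 := sum_eq_zero fun x _ => by split_ifs <;> omega

-- The `κ` above: `Int` division by `d > 0` rounds down.
def shiftedWeight (d p s n : ℕ) : ℤ := ((p : ℤ) * n - s) / d - ((n : ℤ) - s) / d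

theorem shiftedWeight_sub_varpi {d p s : ℕ} (hd : 0 < d) (hs : s ≤ d) (n : ℕ) :
    shiftedWeight d p s n - varpi d p n = weightDefect d p s n := by
  have hpn : ((p * n : ℕ) : ℤ) = (p * n % d : ℕ) + (p * n / d : ℕ) * d := by
    exact_mod_cast (Nat.mod_add_div' (p * n) d).symm
  have hceil : ⌈((p : ℚ) - 1) * n / d⌉ =
      (p * n / d : ℕ) - (n / d : ℕ) + if n % d < p * n % d then 1 else 0 := by
    rw [show ((p : ℚ) - 1) * n = (((p * n : ℕ) : ℤ) - n : ℤ) by push_cast; ring,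
      Rat.ceil_intCast_div_natCast, neg_sub, hpn,
      show (n : ℤ) - ((p * n % d : ℕ) + (p * n / d : ℕ) * d) =
        ((n : ℤ) - (p * n % d : ℕ)) + (-(p * n / d : ℕ) : ℤ) * d by ring,
      Int.add_mul_ediv_right _ _ (by exact_mod_cast hd.ne'),
      Int.natCast_sub_ediv hd (Nat.mod_lt _ hd).le]
    ring
  simp only [shiftedWeight, varpi, weightDefect, hceil, ← Nat.cast_mul,
    Int.natCast_sub_ediv hd hs]
  ring

theorem shiftedWeight_strictMono {d p : ℕ} (hd : 0 < d) (hp : 2 * d ≤ p) (s : ℕ) :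
    StrictMono (shiftedWeight d p s) := by
  refine strictMono_nat_of_lt_succ fun n => ?_
  have hd' : (0 : ℤ) < d := by exact_mod_cast hd
  have hpn : ((p : ℤ) * n - s) / d + 2 ≤ ((p : ℤ) * (n + 1 : ℕ) - s) / d := by
    rw [← Int.add_mul_ediv_right _ _ hd'.ne']
    exact Int.ediv_le_ediv hd' (by push_cast; nlinarith)
  have hn : (((n + 1 : ℕ) : ℤ) - s) / d ≤ ((n : ℤ) - s) / d + 1 := by
    rw [← Int.add_mul_ediv_right _ _ hd'.ne']
    exact Int.ediv_le_ediv hd' (by push_cast; omega)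
  simp only [shiftedWeight]
  omega

theorem varpi_strictMono {d p : ℕ} (hd : 0 < d) (hp : 2 * d < p) : StrictMono (varpi d p) := by
  refine strictMono_nat_of_lt_succ fun n => ?_
  have hdq : (0 : ℚ) < d := by exact_mod_cast hd
  have hpq : 2 * (d : ℚ) + 1 ≤ p := by exact_mod_cast hp
  have hceil : ⌈((p : ℚ) - 1) * n / d⌉ + 2 ≤ ⌈((p : ℚ) - 1) * (n + 1 : ℕ) / d⌉ := by
    rw [← Int.ceil_add_ofNat]
    refine Int.ceil_mono ?_
    rw [div_add' _ _ _ hdq.ne', div_le_div_iff_of_pos_right hdq]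
    push_cast
    nlinarith
  have hδ : ∀ k, 0 ≤ deltaIn d p k ∧ deltaIn d p k ≤ 1 := fun k => by
    unfold deltaIn; split_ifs <;> norm_num
  simp only [varpi]
  linarith [(hδ n).1, (hδ (n + 1)).2]

theorem sum_range_shiftedWeight {d p : ℕ} (hd : 0 < d) (hcop : p.Coprime d) (m : ℕ) :
    ∑ n ∈ range m, shiftedWeight d p (m % d) n = pTri d p m := by
  have hs := (Nat.mod_lt m hd).le
  rw [pTri, ← sub_eq_zero, ← sum_sub_distrib]
  simp_rw [shiftedWeight_sub_varpi hd hs]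
  rw [(weightDefect_periodic hd p _).sum_range, sum_range_weightDefect hd hcop,
    sum_range_weightDefect_of_le hd hcop hs, smul_zero, zero_add]

theorem card_mul_pTri_add_card_sdiff_le_sum_ceil {d p b m : ℕ} [NeZero b] (hd : 0 < d)
    (hcop : p.Coprime d) (hpd : 2 * d ≤ p) {A : Finset (ℕ × ZMod b)} (hcard : #A = b * m)
    {τ : Equiv.Perm (ℕ × ZMod b)} (hτ : ∀ a ∈ A, τ a ∈ A) :
    (b : ℤ) * pTri d p m + #(A \ range m ×ˢ univ) ≤
      ∑ a ∈ A, ⌈((p : ℚ) * a.1 - ((τ a).1 : ℚ)) / d⌉ := by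
  set s := m % d
  have hperm : ∑ a ∈ A, (((τ a).1 : ℤ) - s) / d = ∑ a ∈ A, ((a.1 : ℤ) - s) / d := by
    have hmap : A.map τ.toEmbedding = A := by
      refine eq_of_subset_of_card_le (fun y hy => ?_) (card_map _).ge
      obtain ⟨x, hx, rfl⟩ := mem_map.1 hy
      exact hτ x hx
    conv_rhs => rw [← hmap, sum_map]
    rfl
  have hbox : ∑ x ∈ range m ×ˢ (univ : Finset (ZMod b)), shiftedWeight d p s x.1 =
      b * pTri d p m := by
    simp [sum_product, ← sum_range_shiftedWeight hd hcop m, mul_sum, s]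
  calc (b : ℤ) * pTri d p m + #(A \ range m ×ˢ univ)
      ≤ ∑ a ∈ A, shiftedWeight d p s a.1 := by
        rw [← hbox]
        refine sum_add_card_sdiff_le_sum (c := shiftedWeight d p s m) ?_ (fun x hx => ?_)
          (fun x hx => ?_)
        · simp [hcard, mul_comm]
        · exact shiftedWeight_strictMono hd hpd s (by simpa using (mem_product.1 hx).1)
        · refine (shiftedWeight_strictMono hd hpd s).monotone ?_
          simpa using (mem_sdiff.1 hx).2
    _ = ∑ a ∈ A, (((p : ℤ) * a.1 - s) / d - (((τ a).1 : ℤ) - s) / d) := by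
        rw [sum_sub_distrib, hperm, ← sum_sub_distrib]
        rfl
    _ ≤ ∑ a ∈ A, ⌈((p : ℚ) * a.1 - ((τ a).1 : ℚ)) / d⌉ := sum_le_sum fun a _ => by
        simpa using Int.ediv_sub_ediv_le_ceil hd ((p : ℤ) * a.1) (τ a).1 s

theorem stmt4_general (d p : ℕ) (hd : 0 < d) (hp : p.Prime) (hpd : 3 * d < p)
    (b m : ℕ) [NeZero b]
    (A : Finset (ℕ × ZMod b)) (hcard : A.card = b * m)
    (τ : Equiv.Perm (ℕ × ZMod b)) (hτ : ∀ a ∈ A, τ a ∈ A) :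
    ((b : ℤ) * pTri d p m ≤ ∑ a ∈ A, ⌈((p : ℚ) * a.1 - ((τ a).1 : ℚ)) / d⌉) ∧
    ((varpi d p (m - 1) < varpi d p m ∧
        (↑A : Set (ℕ × ZMod b)) ≠ {x : ℕ × ZMod b | varpi d p x.1 ≤ varpi d p (m - 1)}) →
      (b : ℤ) * pTri d p m < ∑ a ∈ A, ⌈((p : ℚ) * a.1 - ((τ a).1 : ℚ)) / d⌉) := by
  have hcop : p.Coprime d :=
    (hp.coprime_iff_not_dvd).2 fun hdvd => by have := Nat.le_of_dvd hd hdvd; omega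
  have key := card_mul_pTri_add_card_sdiff_le_sum_ceil hd hcop (by omega) hcard hτ
  refine ⟨by linarith [Int.natCast_nonneg #(A \ range m ×ˢ univ)], ?_⟩
  rintro ⟨hturn, hne⟩
  have hA_m : {x : ℕ × ZMod b | varpi d p x.1 ≤ varpi d p (m - 1)} =
      ↑(range m ×ˢ (univ : Finset (ZMod b))) := by
    ext x
    simp [(varpi_strictMono hd (by omega)).le_apply_sub_one_iff hturn]
  have hout : (A \ range m ×ˢ univ).Nonempty := sdiff_nonempty.2 fun hsub => hne <| by
    rw [hA_m, eq_of_subset_of_card_le hsub (by simp [hcard, mul_comm])]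
  have : (1 : ℤ) ≤ #(A \ range m ×ˢ univ) := Nat.one_le_cast.2 (card_pos.2 hout)
  linarith

theorem stmt4 (d p : ℕ) (hd : 0 < d) (hp : p.Prime) (hpd : 3 * d < p)
    (b m : ℕ) [NeZero b] (hm : 1 ≤ m)
    (A : Finset (ℕ × ZMod b)) (hcard : A.card = b * m)
    (τ : Equiv.Perm (ℕ × ZMod b)) (hτ : ∀ a ∈ A, τ a ∈ A)
    (hpos : ∀ a ∈ A, ((τ a).1 : ℤ) ≤ (p : ℤ) * a.1) :
    ((b : ℤ) * pTri d p m ≤ ∑ a ∈ A, ⌈((p : ℚ) * a.1 - ((τ a).1 : ℚ)) / d⌉) ∧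
    ((varpi d p (m - 1) < varpi d p m ∧
        (↑A : Set (ℕ × ZMod b)) ≠ {x : ℕ × ZMod b | varpi d p x.1 ≤ varpi d p (m - 1)}) →
      (b : ℤ) * pTri d p m < ∑ a ∈ A, ⌈((p : ℚ) * a.1 - ((τ a).1 : ℚ)) / d⌉) :=
  stmt4_general d p hd hp hpd b m A hcard τ hτ
end

section
/- Let d be a positive integer and p a prime with p ∤ d. Then for every integer m ≥ 0, p_△(m) ≥ (p−1)·∑_{a=0}^{m−1} a/d, i.e. the arithmetic polygon lies on or above (p−1) times the infinite Hodge polygon of △ = [0, d]. Moreover, equality holds at the point m = d: p_△(d) = (p−1)·∑_{a=0}^{d−1} a/d = (p−1)(d−1)/2. -/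
open scoped Classical

/-! Write `σ a = p * a % d`, a permutation of `{0, …, d - 1}` since `p` is prime to `d`. For `a < d`
the defect `ϖ(a) - (p - 1) a / d` equals `(a - σ a) / d + [a < σ a] - [σ⁻¹ a < a]`. Over `a < m ≤ d`
the indicator terms add up to the number `k` of `a < m` with `σ a ≥ m`, while `∑ σ a ≤ ∑ a + d k`,
so the partial sums of the defect are nonnegative, and they vanish at `m = d` where `σ` permutes.
The defect is `d`-periodic, which extends nonnegativity to all `m`. -/

open Finset

section

variable {d p m : ℕ}

noncomputable def varpiDefect (d p a : ℕ) : ℚ := varpi d p a - ((p : ℚ) - 1) * ((a : ℚ) / d)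

theorem pTri_sub_eq_sum_varpiDefect (d p m : ℕ) :
    (pTri d p m : ℚ) - ((p : ℚ) - 1) * ∑ a ∈ range m, (a : ℚ) / d =
      ∑ a ∈ range m, varpiDefect d p a := by
  simp only [pTri, varpiDefect, Int.cast_sum, mul_sum, sum_sub_distrib]

theorem varpiDefect_periodic (hd : 0 < d) : Function.Periodic (varpiDefect d p) d := by
  intro a
  have hshift : ((a + d : ℕ) : ℚ) / d = (a : ℚ) / d + 1 := by
    push_cast
    field_simp
  have hceil : ⌈((p : ℚ) - 1) * ((a + d : ℕ) : ℚ) / d⌉ =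
      ⌈((p : ℚ) - 1) * a / d⌉ + ((p : ℤ) - 1) := by
    rw [← Int.ceil_add_intCast, mul_div_assoc, mul_div_assoc, hshift]
    push_cast
    congr 1
    ring
  have hdelta : deltaIn d p (a + d) = deltaIn d p a := by
    simp only [deltaIn, hshift, Int.fract_add_one, Nat.ModEq, Nat.add_mod_right]
    congr
  simp only [varpiDefect, varpi, hceil, hdelta, hshift]
  push_cast
  ring

theorem ceil_natCast_sub_div_eq_ite {x y : ℕ} (hx : x ≤ d) (hy : y < d) :
    ⌈((x : ℚ) - y) / d⌉ = if y < x then 1 else 0 := by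
  have hd : (0 : ℚ) < d := by exact_mod_cast (Nat.zero_le y).trans_lt hy
  have hx' : (x : ℚ) ≤ d := by exact_mod_cast hx
  have hy' : (y : ℚ) < d := by exact_mod_cast hy
  rw [Int.ceil_eq_iff, lt_div_iff₀ hd, div_le_iff₀ hd]
  split_ifs with h
  · have : (y : ℚ) < x := by exact_mod_cast h
    push_cast
    constructor <;> linarith
  · have : (x : ℚ) ≤ y := by exact_mod_cast not_lt.mp h
    push_cast
    constructor <;> linarith [Nat.cast_nonneg (α := ℚ) x]

theorem deltaIn_of_lt {a : ℕ} (ha : a < d) :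
    deltaIn d p a = if ∃ i < a, p * i % d = a then 1 else 0 := by
  have hd : (0 : ℚ) < d := by exact_mod_cast (Nat.zero_le a).trans_lt ha
  have hfract : Int.fract ((a : ℚ) / d) = a / d :=
    Int.fract_eq_self.mpr ⟨by positivity, (div_lt_one hd).mpr (by exact_mod_cast ha)⟩
  simp only [deltaIn, hfract, div_lt_div_iff_of_pos_right hd, Nat.cast_lt, Nat.ModEq,
    Nat.mod_eq_of_lt ha]
  congr 1
  apply propext
  constructor
  · rintro ⟨i, -, hi, hia⟩
    exact ⟨i, hia, hi⟩
  · rintro ⟨i, hia, hi⟩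
    refine ⟨i, Nat.pos_of_ne_zero ?_, hi, hia⟩
    rintro rfl
    rw [mul_zero, Nat.zero_mod] at hi
    omega

theorem varpiDefect_of_lt {a : ℕ} (ha : a < d) :
    varpiDefect d p a = ((a : ℚ) - (p * a % d : ℕ)) / d + (if a < p * a % d then 1 else 0) -
      (if ∃ i < a, p * i % d = a then 1 else 0) := by
  have hd : (d : ℚ) ≠ 0 := by exact_mod_cast ((Nat.zero_le a).trans_lt ha).ne'
  have hdiv : ((p : ℚ) - 1) * a / d = (p * a / d : ℕ) + ((p * a % d : ℕ) - (a : ℚ)) / d := by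
    have h := congrArg (Nat.cast : ℕ → ℚ) (Nat.div_add_mod (p * a) d)
    push_cast at h
    field_simp
    linear_combination -h
  have hceil : ⌈((p : ℚ) - 1) * a / d⌉ = (p * a / d : ℕ) + if a < p * a % d then 1 else 0 := by
    rw [hdiv, add_comm, Int.ceil_add_natCast, add_comm,
      ceil_natCast_sub_div_eq_ite (Nat.mod_lt _ ((Nat.zero_le a).trans_lt ha)).le ha]
  rw [varpiDefect, varpi, hceil, deltaIn_of_lt ha, mul_div_assoc', hdiv]
  simp only [Int.cast_sub, Int.cast_add, Int.cast_natCast, apply_ite Int.cast, Int.cast_one,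
    Int.cast_zero]
  ring

theorem mulMod_injOn (hco : p.Coprime d) {s : Finset ℕ} (hs : s ⊆ range d) :
    Set.InjOn (fun a => p * a % d) s := by
  intro a ha b hb hab
  have hab' := Nat.ModEq.cancel_left_of_coprime hco.symm.gcd_eq_one hab
  rwa [Nat.ModEq, Nat.mod_eq_of_lt (mem_range.mp (hs ha)), Nat.mod_eq_of_lt (mem_range.mp (hs hb))]
    at hab'

theorem card_filter_lt_mulMod (hco : p.Coprime d) (hm : m ≤ d) :
    #{a ∈ range m | a < p * a % d} =
      #{a ∈ range m | ∃ i < a, p * i % d = a} + #{a ∈ range m | m ≤ p * a % d} := by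
  have hhit : {a ∈ range m | ∃ i < a, p * i % d = a} =
      {i ∈ range m | i < p * i % d ∧ p * i % d < m}.image (fun a => p * a % d) := by
    ext a
    simp only [mem_filter, mem_range, mem_image]
    constructor
    · rintro ⟨ham, i, hia, rfl⟩
      exact ⟨i, ⟨by omega, hia, ham⟩, rfl⟩
    · rintro ⟨i, ⟨-, hi, him⟩, rfl⟩
      exact ⟨him, i, hi, rfl⟩
  rw [hhit, card_image_of_injOn (mulMod_injOn hco ((filter_subset _ _).trans
      (range_subset_range.mpr hm))),
    ← card_filter_add_card_filter_not (p := fun a => p * a % d < m), filter_filter, filter_filter]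
  congr 2
  ext a
  simp only [mem_filter, mem_range]
  omega

theorem sum_range_mulMod_le (hco : p.Coprime d) (hm : m ≤ d) :
    ∑ a ∈ range m, p * a % d ≤ ∑ a ∈ range m, a + d * #{a ∈ range m | m ≤ p * a % d} := by
  rw [← sum_filter_add_sum_filter_not (range m) (fun a => p * a % d < m)]
  simp only [not_lt]
  gcongr
  · calc ∑ a ∈ range m with p * a % d < m, p * a % d
          = ∑ b ∈ {a ∈ range m | p * a % d < m}.image (fun a => p * a % d), b :=
            (sum_image (f := fun b => b) (mulMod_injOn hco ((filter_subset _ _).trans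
              (range_subset_range.mpr hm)))).symm
      _ ≤ ∑ b ∈ range m, b := sum_le_sum_of_subset fun b hb => by
            obtain ⟨a, ha, rfl⟩ := mem_image.mp hb
            exact mem_range.mpr (mem_filter.mp ha).2
  · rw [mul_comm, ← smul_eq_mul]
    exact sum_le_card_nsmul _ _ _ fun a ha =>
      (Nat.mod_lt _ ((Nat.zero_le a).trans_lt (mem_range.mp (mem_filter.mp ha).1) |>.trans_le hm)).le

theorem sum_range_varpiDefect_of_le (hco : p.Coprime d) (hm : m ≤ d) :
    ∑ a ∈ range m, varpiDefect d p a =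
      (((∑ a ∈ range m, a : ℕ) : ℚ) - (∑ a ∈ range m, p * a % d : ℕ)) / d +
        #{a ∈ range m | m ≤ p * a % d} := by
  rw [sum_congr rfl fun a ha => varpiDefect_of_lt ((mem_range.mp ha).trans_le hm),
    sum_sub_distrib, sum_add_distrib, sum_boole, sum_boole, ← sum_div, sum_sub_distrib,
    card_filter_lt_mulMod hco hm]
  push_cast
  ring

theorem sum_range_varpiDefect_nonneg_of_le (hco : p.Coprime d) (hm : m ≤ d) :
    0 ≤ ∑ a ∈ range m, varpiDefect d p a := by
  rcases m.eq_zero_or_pos with rfl | hm0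
  · simp
  have hd : (0 : ℚ) < d := by exact_mod_cast hm0.trans_le hm
  have hsum : ((∑ a ∈ range m, p * a % d : ℕ) : ℚ) ≤
      (∑ a ∈ range m, a : ℕ) + d * #{a ∈ range m | m ≤ p * a % d} := by
    exact_mod_cast sum_range_mulMod_le hco hm
  rw [sum_range_varpiDefect_of_le hco hm, ← neg_le_iff_add_nonneg, le_div_iff₀ hd]
  linarith

theorem sum_range_varpiDefect_self (hd : 0 < d) (hco : p.Coprime d) :
    ∑ a ∈ range d, varpiDefect d p a = 0 := by
  have hperm : (range d).image (fun a => p * a % d) = range d :=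
    eq_of_subset_of_card_le (fun b hb => by
        obtain ⟨a, -, rfl⟩ := mem_image.mp hb
        exact mem_range.mpr (Nat.mod_lt _ hd))
      (card_image_of_injOn (mulMod_injOn hco subset_rfl)).ge
  have hsum : ∑ a ∈ range d, p * a % d = ∑ a ∈ range d, a := by
    rw [← sum_image (f := fun b => b) (mulMod_injOn hco subset_rfl), hperm]
  have hnone : {a ∈ range d | d ≤ p * a % d} = ∅ :=
    filter_false_of_mem fun a _ => not_le.mpr (Nat.mod_lt _ hd)
  rw [sum_range_varpiDefect_of_le hco le_rfl, hsum, hnone]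
  simp

theorem sum_range_varpiDefect_nonneg (hd : 0 < d) (hco : p.Coprime d) (m : ℕ) :
    0 ≤ ∑ a ∈ range m, varpiDefect d p a := by
  induction m using Nat.strong_induction_on with
  | _ m ih =>
    rcases le_or_gt m d with hm | hm
    · exact sum_range_varpiDefect_nonneg_of_le hco hm
    obtain ⟨n, rfl⟩ := Nat.exists_eq_add_of_le hm.le
    have hshift : ∑ a ∈ range n, varpiDefect d p (d + a) = ∑ a ∈ range n, varpiDefect d p a :=
      sum_congr rfl fun a _ => by rw [add_comm, varpiDefect_periodic hd]
    rw [sum_range_add, sum_range_varpiDefect_self hd hco, hshift, zero_add]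
    exact ih n (by omega)

theorem sum_range_natCast_div_self (hd : 0 < d) :
    ∑ a ∈ range d, (a : ℚ) / d = ((d : ℚ) - 1) / 2 := by
  have hgauss : ((∑ a ∈ range d, a : ℕ) : ℚ) * 2 = d * ((d : ℚ) - 1) := by
    rw [← Nat.cast_pred hd]
    exact_mod_cast sum_range_id_mul_two d
  rw [← sum_div, ← Nat.cast_sum, div_eq_div_iff (by positivity) two_ne_zero, hgauss]
  ring

end

theorem stmt5 (d p : ℕ) (hd : 0 < d) (hp : p.Prime) (hpd : ¬ p ∣ d) :
    (∀ m : ℕ, ((p : ℚ) - 1) * ∑ a ∈ Finset.range m, (a : ℚ) / d ≤ (pTri d p m : ℚ)) ∧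
    (pTri d p d : ℚ) = ((p : ℚ) - 1) * ∑ a ∈ Finset.range d, (a : ℚ) / d ∧
    (pTri d p d : ℚ) = ((p : ℚ) - 1) * ((d : ℚ) - 1) / 2 := by
  have hco : p.Coprime d := (Nat.Prime.coprime_iff_not_dvd hp).mpr hpd
  have hpTri_d : (pTri d p d : ℚ) = ((p : ℚ) - 1) * ∑ a ∈ range d, (a : ℚ) / d := by
    linarith [pTri_sub_eq_sum_varpiDefect d p d, sum_range_varpiDefect_self hd hco]
  refine ⟨fun m => ?_, hpTri_d, ?_⟩
  · linarith [pTri_sub_eq_sum_varpiDefect d p m, sum_range_varpiDefect_nonneg hd hco m]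
  · rw [hpTri_d, sum_range_natCast_div_self hd]
    ring
end

section
/- Let A be a finite set of integers, τ a permutation of A, and p ≥ 2 an integer. Then ∑_{i ∈ A} |p·i − τ(i)| ≥ (p−1)·∑_{i ∈ A} |i|. Moreover, if in addition p ≥ |j| for every j ∈ A, then equality holds if and only if τ preserves signs, i.e. sgn(τ(i)) = sgn(i) for every i ∈ A (where sgn(0) = 0). -/
/-!
Termwise, `|p i - τ i| ≥ p |i| - |τ i|` by the reverse triangle inequality, and summing gives the
bound because `τ` permutes `A`, so `∑ |τ i| = ∑ |i|`. Equality of the sums forces equality in every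
term, which makes `τ i` have the sign of `i` whenever `τ i ≠ 0`; the case `τ i = 0 ≠ i` is excluded
because then `0 ∈ A` and `τ 0 ≠ 0`. Conversely, if the signs agree and `|τ i| ≤ p ≤ p |i|` for
`i ≠ 0`, every term is an equality.
-/

theorem Finset.sum_comp_perm_of_mapsTo {α M : Type*} [AddCommMonoid M] {s : Finset α}
    {σ : Equiv.Perm α} (hσ : ∀ i ∈ s, σ i ∈ s) (f : α → M) :
    ∑ i ∈ s, f (σ i) = ∑ i ∈ s, f i :=
  Finset.sum_nbij σ hσ σ.injective.injOn
    (Finset.surjOn_of_injOn_of_card_le σ hσ σ.injective.injOn le_rfl) fun _ _ => rfl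

namespace Int

theorem mul_abs_sub_abs_le_abs_mul_sub (p i j : ℤ) : p * |i| - |j| ≤ |p * i - j| :=
  calc p * |i| - |j| ≤ |p * i| - |j| := by rw [abs_mul]; gcongr; exact le_abs_self p
    _ ≤ |p * i - j| := abs_sub_abs_le_abs_sub _ _

theorem sign_eq_of_abs_mul_sub_eq {p i j : ℤ} (hj : j ≠ 0)
    (h : |p * i - j| = p * |i| - |j|) : j.sign = i.sign := by
  rcases lt_trichotomy i 0 with hi | rfl | hi
  · rcases hj.lt_or_gt with hj | hj
    · rw [sign_eq_neg_one_of_neg hi, sign_eq_neg_one_of_neg hj]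
    · rw [abs_of_neg hi, abs_of_pos hj] at h
      linarith [neg_le_abs (p * i - j)]
  · simp only [mul_zero, zero_sub, abs_neg, abs_zero] at h
    exact absurd (abs_eq_zero.1 (by linarith [abs_nonneg j])) hj
  · rcases hj.lt_or_gt with hj | hj
    · rw [abs_of_pos hi, abs_of_neg hj] at h
      linarith [le_abs_self (p * i - j)]
    · rw [sign_eq_one_of_pos hi, sign_eq_one_of_pos hj]

theorem abs_mul_sub_eq_of_sign_eq {p i j : ℤ} (hj : |j| ≤ p) (h : j.sign = i.sign) :
    |p * i - j| = p * |i| - |j| := by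
  rcases lt_trichotomy i 0 with hi | rfl | hi
  · rw [sign_eq_neg_one_of_neg hi, sign_eq_neg_one_iff_neg] at h
    rw [abs_of_neg h] at hj
    rw [abs_of_neg hi, abs_of_neg h, abs_of_nonpos (by nlinarith)]
    ring
  · rw [sign_zero, sign_eq_zero_iff_zero] at h
    simp [h]
  · rw [sign_eq_one_of_pos hi, sign_eq_one_iff_pos] at h
    rw [abs_of_pos h] at hj
    rw [abs_of_pos hi, abs_of_pos h, abs_of_nonneg (by nlinarith)]

theorem sign_perm_apply_eq_of_ne_zero {A : Finset ℤ} {τ : Equiv.Perm ℤ}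
    (hτ : ∀ i ∈ A, τ i ∈ A) (h : ∀ i ∈ A, τ i ≠ 0 → (τ i).sign = i.sign) :
    ∀ i ∈ A, (τ i).sign = i.sign := by
  intro i hi
  by_cases hτi : τ i = 0
  · by_contra hne
    have hi0 : i ≠ 0 := by rintro rfl; exact hne (by rw [hτi])
    have hτ0 : τ 0 ≠ 0 := fun h0 => hi0 (τ.injective (hτi.trans h0.symm))
    exact hτ0 (sign_eq_zero_iff_zero.1 (h 0 (hτi ▸ hτ i hi) hτ0))
  · exact h i hi hτi

end Int

theorem stmt8_general (p : ℤ) (A : Finset ℤ)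
    (τ : Equiv.Perm ℤ) (hτ : ∀ i ∈ A, τ i ∈ A) :
    ((p - 1) * ∑ i ∈ A, |i| ≤ ∑ i ∈ A, |p * i - τ i|) ∧
    ((∀ j ∈ A, |j| ≤ p) →
      ((∑ i ∈ A, |p * i - τ i| = (p - 1) * ∑ i ∈ A, |i|) ↔
        ∀ i ∈ A, Int.sign (τ i) = Int.sign i)) := by
  have hdef : (p - 1) * ∑ i ∈ A, |i| = ∑ i ∈ A, (p * |i| - |τ i|) := by
    rw [Finset.sum_sub_distrib, Finset.sum_comp_perm_of_mapsTo hτ, ← Finset.mul_sum]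
    ring
  have hle : ∀ i ∈ A, p * |i| - |τ i| ≤ |p * i - τ i| := fun i _ =>
    Int.mul_abs_sub_abs_le_abs_mul_sub p i (τ i)
  refine ⟨hdef ▸ Finset.sum_le_sum hle, fun hbound => ⟨fun heq => ?_, fun hsign => ?_⟩⟩
  · have hpt := (Finset.sum_eq_sum_iff_of_le hle).1 (hdef ▸ heq.symm)
    exact Int.sign_perm_apply_eq_of_ne_zero hτ fun i hi hτi =>
      Int.sign_eq_of_abs_mul_sub_eq hτi (hpt i hi).symm
  · rw [hdef]
    exact Finset.sum_congr rfl fun i hi =>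
      Int.abs_mul_sub_eq_of_sign_eq (hbound _ (hτ i hi)) (hsign i hi)

theorem stmt8 (p : ℤ) (hp : 2 ≤ p) (A : Finset ℤ)
    (τ : Equiv.Perm ℤ) (hτ : ∀ i ∈ A, τ i ∈ A) :
    ((p - 1) * ∑ i ∈ A, |i| ≤ ∑ i ∈ A, |p * i - τ i|) ∧
    ((∀ j ∈ A, |j| ≤ p) →
      ((∑ i ∈ A, |p * i - τ i| = (p - 1) * ∑ i ∈ A, |i|) ↔
        ∀ i ∈ A, Int.sign (τ i) = Int.sign i)) :=
  stmt8_general p A τ hτ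
end

section
/- Let K be a field, b ≥ 1 an integer, ζ ∈ K a primitive b-th root of unity, and M an n × n matrix over K. Then the following identity holds in the polynomial ring K[s]: ∏_{j=0}^{b−1} det(I − ζ^j · s · M) = det(I − s^b · M^b), where I is the n × n identity matrix and det is taken of matrices over K[s]. -/
/-! Put `A = s • M`. Each factor `1 - ζ ^ j • A` is the polynomial `1 - ζ ^ j X` evaluated at `A`,
and `p ↦ det (p(A))` is multiplicative on `K[X]`. So the product of the determinants is the
determinant of `∏ j < b, (1 - ζ ^ j X)(A)`, and that product of polynomials is `1 - X ^ b`: put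
`Y = 1` in the factorisation `Y ^ b - X ^ b = ∏ j < b, (Y - ζ ^ j X)`. -/

open Polynomial Finset

theorem IsPrimitiveRoot.prod_one_sub_pow_mul {R : Type*} [CommRing R] [IsDomain R] {ζ : R}
    {b : ℕ} (hζ : IsPrimitiveRoot ζ b) (hb : 0 < b) (x : R) :
    ∏ j ∈ range b, (1 - ζ ^ j * x) = 1 - x ^ b := by
  have h := congrArg (eval 1) (X_pow_sub_C_eq_prod hζ hb (rfl : x ^ b = x ^ b))
  simpa [eval_prod] using h.symm

theorem IsPrimitiveRoot.prod_det_one_sub_pow_smul {R S n : Type*} [CommRing R] [IsDomain R]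
    [CommRing S] [Algebra R S] [Fintype n] [DecidableEq n] {ζ : R} {b : ℕ}
    (hζ : IsPrimitiveRoot ζ b) (hb : 0 < b) (A : Matrix n n S) :
    ∏ j ∈ range b, (1 - ζ ^ j • A).det = (1 - A ^ b).det := by
  let detEval : R[X] →* S := Matrix.detMonoidHom.comp (aeval A : R[X] →ₐ[R] _).toMonoidHom
  have hfactor (j : ℕ) : (1 - ζ ^ j • A).det = detEval (1 - C (ζ ^ j) * X) := by
    simp [detEval, Algebra.smul_def]
  calc ∏ j ∈ range b, (1 - ζ ^ j • A).det
      = detEval (∏ j ∈ range b, (1 - C ζ ^ j * X)) := by simp only [hfactor, map_pow, map_prod]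
    _ = (1 - A ^ b).det := by
      rw [(hζ.map_of_injective C_injective).prod_one_sub_pow_mul hb]
      simp [detEval]

theorem stmt9 {K : Type*} [Field K] (b : ℕ) (hb : 1 ≤ b) (ζ : K)
    (hζ1 : ζ ^ b = 1) (hζ2 : ∀ j : ℕ, 0 < j → j < b → ζ ^ j ≠ 1)
    (n : ℕ) (M : Matrix (Fin n) (Fin n) K) :
    ∏ j ∈ Finset.range b,
      Matrix.det ((1 : Matrix (Fin n) (Fin n) (Polynomial K)) -
        (Polynomial.C (ζ ^ j) * Polynomial.X) • M.map Polynomial.C) =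
    Matrix.det ((1 : Matrix (Fin n) (Fin n) (Polynomial K)) -
      (Polynomial.X ^ b : Polynomial K) • (M ^ b).map Polynomial.C) := by
  have hζ : IsPrimitiveRoot ζ b := .mk_of_lt ζ hb hζ1 hζ2
  have hpow : ((X : K[X]) • M.map C) ^ b = (X ^ b : K[X]) • (M ^ b).map C := by
    rw [_root_.smul_pow, ← Matrix.map_pow]
  have hsmul (j : ℕ) : (C (ζ ^ j) * X) • M.map C = ζ ^ j • (X : K[X]) • M.map C := by
    rw [mul_smul, C_eq_algebraMap, algebraMap_smul]
  simp only [hsmul, ← hpow]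
  exact hζ.prod_det_one_sub_pow_smul hb _
end

section
/- Let d be a positive integer and p a prime with p ∤ d, and let m be an integer with 0 < m ≤ d. Then ∑_{a=1}^{m−1} a/d − ∑_{1 ≤ a < m, d·{pa/d} < m} {pa/d} ≥ 0; that is, the sum of the fractional parts {pa/d} over those a ∈ {1, …, m−1} with d·{pa/d} < m is at most ∑_{a=1}^{m−1} a/d. -/
open scoped Classical

/-!
Since `{pa/d} = (pa mod d)/d`, the condition `d·{pa/d} < m` says that `pa mod d` lies in
`{1, …, m−1}` (it is nonzero because `p` is a unit mod `d` and `0 < a < d`). Multiplication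
by `p` is injective on residues mod `d`, so the sum of the `{pa/d}` over the selected `a` is a
sum of `b/d` over distinct `b ∈ {1, …, m−1}`, hence at most `∑_{b=1}^{m−1} b/d`.
-/

open Finset

section MulMod

variable {p d : ℕ}

theorem Nat.injOn_mul_mod_of_coprime (hpd : p.Coprime d) :
    Set.InjOn (fun a => p * a % d) (Set.Iio d) := fun a ha b hb hab => by
  have hmod : a % d = b % d := Nat.ModEq.cancel_left_of_coprime hpd.symm.gcd_eq_one hab
  rwa [Nat.mod_eq_of_lt ha, Nat.mod_eq_of_lt hb] at hmod

theorem Nat.mul_mod_pos_of_coprime (hpd : p.Coprime d) {a : ℕ} (ha : 0 < a) (had : a < d) :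
    0 < p * a % d := by
  refine Nat.pos_of_ne_zero fun h => ?_
  have hda : d ∣ a := hpd.symm.dvd_of_dvd_mul_left (Nat.dvd_of_mod_eq_zero h)
  exact absurd (Nat.le_of_dvd ha hda) (by omega)

theorem sum_filter_mul_mod_lt_le {M : Type*} [AddCommMonoid M] [PartialOrder M]
    [IsOrderedAddMonoid M] (hpd : p.Coprime d) {m : ℕ} (hm : m ≤ d) (f : ℕ → M)
    (hf : ∀ b, 0 ≤ f b) :
    ∑ a ∈ (Ico 1 m).filter (fun a => p * a % d < m), f (p * a % d) ≤ ∑ b ∈ Ico 1 m, f b := by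
  have hinj : Set.InjOn (fun a => p * a % d) ((Ico 1 m).filter (fun a => p * a % d < m)) :=
    (Nat.injOn_mul_mod_of_coprime hpd).mono fun a ha => by
      simp only [coe_filter, mem_Ico, Set.mem_ofPred_eq] at ha
      exact Set.mem_Iio.mpr (by omega)
  rw [← sum_image hinj]
  refine sum_le_sum_of_subset_of_nonneg (fun b hb => ?_) fun b _ _ => hf b
  obtain ⟨a, ha, rfl⟩ := mem_image.mp hb
  simp only [mem_filter, mem_Ico] at ha
  exact mem_Ico.mpr ⟨Nat.mul_mod_pos_of_coprime hpd ha.1.1 (by omega), ha.2⟩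

end MulMod

theorem Int.fract_natCast_mul_div_natCast {k : Type*} [Field k] [LinearOrder k]
    [IsOrderedRing k] [FloorRing k] (p a d : ℕ) :
    Int.fract ((p : k) * a / d) = ((p * a % d : ℕ) : k) / d := by
  rw [← Nat.cast_mul, Int.fract_div_natCast_eq_div_natCast_mod]

theorem sum_filter_fract_mul_div_le {p d m : ℕ} (hpd : p.Coprime d) (hm : m ≤ d) :
    ∑ a ∈ (Ico 1 m).filter (fun a : ℕ => (d : ℚ) * Int.fract ((p : ℚ) * a / d) < m),
        Int.fract ((p : ℚ) * a / d) ≤ ∑ a ∈ Ico 1 m, (a : ℚ) / d := by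
  have hfilter : (Ico 1 m).filter (fun a : ℕ => (d : ℚ) * Int.fract ((p : ℚ) * a / d) < m) =
      (Ico 1 m).filter (fun a => p * a % d < m) := by
    refine filter_congr fun a ha => ?_
    have hd : (d : ℚ) ≠ 0 := Nat.cast_ne_zero.mpr (by simp only [mem_Ico] at ha; omega)
    rw [Int.fract_natCast_mul_div_natCast, mul_div_cancel₀ _ hd, Nat.cast_lt]
  rw [hfilter]
  simp_rw [Int.fract_natCast_mul_div_natCast]
  exact sum_filter_mul_mod_lt_le hpd hm (fun b => (b : ℚ) / d) fun b => by positivity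

theorem stmt13_general (d p : ℕ) (hp : p.Prime) (hpd : ¬ p ∣ d)
    (m : ℕ) (hm2 : m ≤ d) :
    0 ≤ ∑ a ∈ Finset.Ico 1 m, (a : ℚ) / d -
      ∑ a ∈ (Finset.Ico 1 m).filter (fun a => d * Int.fract (((p : ℚ) * a) / d) < m),
        Int.fract (((p : ℚ) * a) / d) := by
  -- In the statement the filtered sum runs over `Ico 1 m` pushed into `ℚ` by the `Finset` monad.
  simp only [bind_pure_comp, fmap_def, filter_image, sum_image Nat.cast_injective.injOn,
    sub_nonneg]
  exact sum_filter_fract_mul_div_le (hp.coprime_iff_not_dvd.mpr hpd) hm2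

theorem stmt13 (d p : ℕ) (hd : 0 < d) (hp : p.Prime) (hpd : ¬ p ∣ d)
    (m : ℕ) (hm1 : 0 < m) (hm2 : m ≤ d) :
    0 ≤ ∑ a ∈ Finset.Ico 1 m, (a : ℚ) / d -
      ∑ a ∈ (Finset.Ico 1 m).filter (fun a => d * Int.fract (((p : ℚ) * a) / d) < m),
        Int.fract (((p : ℚ) * a) / d) :=
  stmt13_general d p hp hpd m hm2
end
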